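/- Let I = (x_1,x_2,x_3)^k ⊆ S = K[x_1,x_2,x_3] be the k-th power of the irrelevant maximal ideal, where k ≥ 2. Then sdepth(I) = 1. -/

import Mathlib

open MvPolynomial

noncomputable section

/-- The Stanley space `u·K[Z]` where `u` is the monomial with exponent vector `d`:
the `K`-vector subspace of `K[x_1,…,x_n]` spanned by all monomials `u·w` with
`supp(w) ⊆ Z`. -/
def stanleySpace (K : Type*) [Field K] {n : ℕ} (d : Fin n →₀ ℕ) (Z : Finset (Fin n)) :
    Submodule K (MvPolynomial (Fin n) K) :=
  Submodule.span K
    {p | ∃ e : Fin n →₀ ℕ, (e.support : Set (Fin n)) ⊆ (Z : Set (Fin n)) ∧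
      p = monomial (d + e) (1 : K)}

/-- `(d, Z)` indexed by `Fin r` is a Stanley decomposition of the `K`-subspace `V` of
`K[x_1,…,x_n]`: the Stanley spaces `u_i K[Z_i]` are independent (so their sum is direct)
and their sum is `V`. -/
def IsStanleyDecomp {K : Type*} [Field K] {n : ℕ}
    (V : Submodule K (MvPolynomial (Fin n) K)) (r : ℕ)
    (d : Fin r → (Fin n →₀ ℕ)) (Z : Fin r → Finset (Fin n)) : Prop :=
  iSupIndep (fun i => stanleySpace K (d i) (Z i)) ∧
    (⨆ i, stanleySpace K (d i) (Z i)) = V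

/-- The Stanley depth of a `K`-subspace `V` of `K[x_1,…,x_n]`:
the largest `k` such that `V` has a Stanley decomposition all of whose Stanley spaces
have dimension (number of variables) at least `k`. -/
def sdepth {K : Type*} [Field K] {n : ℕ} (V : Submodule K (MvPolynomial (Fin n) K)) : ℕ :=
  sSup {k | ∃ r d Z, IsStanleyDecomp V r d Z ∧ ∀ i, k ≤ (Z i).card}

/-- `J^c`: the `K`-subspace of `K[x_1,…,x_n]` spanned by all monomials not contained in
the ideal `J`. -/
def monomialCompl {K : Type*} [Field K] {n : ℕ} (J : Ideal (MvPolynomial (Fin n) K)) :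
    Submodule K (MvPolynomial (Fin n) K) :=
  Submodule.span K
    {p | ∃ d : Fin n →₀ ℕ, monomial d (1 : K) ∉ J ∧ p = monomial d (1 : K)}

/-- `sdepth(S/I)`, realized as the Stanley depth of `I^c`. -/
def sdepthQuot {K : Type*} [Field K] {n : ℕ} (I : Ideal (MvPolynomial (Fin n) K)) : ℕ :=
  sdepth (monomialCompl I)

/-- `sdepth(I)` for an ideal `I`, viewed as a `K`-subspace. -/
def sdepthIdeal {K : Type*} [Field K] {n : ℕ} (I : Ideal (MvPolynomial (Fin n) K)) : ℕ :=
  sdepth (Submodule.restrictScalars K I)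

/-- A monomial ideal: an ideal generated by the monomials it contains. -/
def IsMonomialIdeal {K : Type*} [Field K] {n : ℕ} (I : Ideal (MvPolynomial (Fin n) K)) :
    Prop :=
  I = Ideal.span {p | ∃ d : Fin n →₀ ℕ, monomial d (1 : K) ∈ I ∧ p = monomial d (1 : K)}

/-- `G(I)`: the exponent vectors of the minimal monomial generators of `I`, i.e. the
monomials of `I` that are minimal with respect to divisibility. -/
def minGens {K : Type*} [Field K] {n : ℕ} (I : Ideal (MvPolynomial (Fin n) K)) :
    Set (Fin n →₀ ℕ) :=
  {d | monomial d (1 : K) ∈ I ∧ ∀ e : Fin n →₀ ℕ, e ≤ d → monomial e (1 : K) ∈ I → e = d}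

/-- `g(I) = |G(I)|`, the number of minimal monomial generators of `I`. -/
def numGens {K : Type*} [Field K] {n : ℕ} (I : Ideal (MvPolynomial (Fin n) K)) : ℕ :=
  (minGens I).ncard

/-- The exponent vector of `v = gcd(u : u ∈ G(I))`. -/
def gcdExp {K : Type*} [Field K] {n : ℕ} (I : Ideal (MvPolynomial (Fin n) K)) :
    Fin n →₀ ℕ :=
  Finsupp.ofSupportFinite (fun i => sInf {k | ∃ d ∈ minGens I, d i = k}) (Set.toFinite _)

/-- `I' = (I : v)`, where `v = gcd(u : u ∈ G(I))`. -/
def colonGcd {K : Type*} [Field K] {n : ℕ} (I : Ideal (MvPolynomial (Fin n) K)) :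
    Ideal (MvPolynomial (Fin n) K) :=
  Submodule.colon I (Ideal.span {monomial (gcdExp I) (1 : K)})

/-- `c(I) = |supp(I')|`, the number of variables dividing at least one minimal monomial
generator of `I' = (I : gcd(u : u ∈ G(I)))`. -/
def numSupp {K : Type*} [Field K] {n : ℕ} (I : Ideal (MvPolynomial (Fin n) K)) : ℕ :=
  {i : Fin n | ∃ d ∈ minGens (colonGcd I), d i ≠ 0}.ncard

/-- The irrelevant maximal ideal `(x_1,…,x_n)` of a polynomial ring. -/
def irrelevantIdeal (K : Type*) [Field K] (σ : Type*) : Ideal (MvPolynomial σ K) :=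
  Ideal.span (Set.range MvPolynomial.X)

/-- The saturation `I^sat = ∪_{k ≥ 1} (I : (x_1,…,x_n)^k)` of an ideal of a polynomial
ring with respect to the irrelevant maximal ideal. -/
def satIdeal {K : Type*} [Field K] {σ : Type*} (I : Ideal (MvPolynomial σ K)) :
    Ideal (MvPolynomial σ K) :=
  ⨆ k : ℕ, Submodule.colon I ((irrelevantIdeal K σ ^ k : Ideal (MvPolynomial σ K)) : Set (MvPolynomial σ K))

end

noncomputable section AuxiliaryLemmas
open Pointwise
variable {K : Type*} [Field K]

def SE {n : ℕ} (d : Fin n →₀ ℕ) (Z : Finset (Fin n)) : Set (Fin n →₀ ℕ) :=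
  {f | ∃ e : Fin n →₀ ℕ, (e.support : Set (Fin n)) ⊆ (Z : Set (Fin n)) ∧ f = d + e}

lemma stanleySpace_eq_span {n : ℕ} (d : Fin n →₀ ℕ) (Z : Finset (Fin n)) :
    stanleySpace K d Z = Submodule.span K ((fun e => monomial e (1:K)) '' SE d Z) := by
  have hset : {p : MvPolynomial (Fin n) K | ∃ e : Fin n →₀ ℕ,
      (e.support : Set (Fin n)) ⊆ (Z : Set (Fin n)) ∧ p = monomial (d + e) (1 : K)} =
      (fun e => monomial e (1:K)) '' SE d Z := by
    ext p
    constructor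
    · rintro ⟨e, he, rfl⟩; exact ⟨d + e, ⟨e, he, rfl⟩, rfl⟩
    · rintro ⟨f, ⟨e, he, rfl⟩, rfl⟩; exact ⟨e, he, rfl⟩
  rw [stanleySpace, hset]

lemma mem_SE_iff {n : ℕ} {d : Fin n →₀ ℕ} {Z : Finset (Fin n)} {f : Fin n →₀ ℕ} :
    f ∈ SE d Z ↔ (∀ i, d i ≤ f i) ∧ ∀ i ∉ Z, f i = d i := by
  constructor
  · rintro ⟨e, he, rfl⟩
    constructor
    · intro i; simp
    · intro i hi
      have : e i = 0 := by
        by_contra h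
        exact hi (he (by simpa [Finsupp.mem_support_iff] using h))
      simp [this]
  · rintro ⟨h1, h2⟩
    refine ⟨f - d, ?_, ?_⟩
    · intro i hi
      simp only [Finset.coe_sort_coe, Finset.mem_coe, Finsupp.mem_support_iff] at hi
      by_contra h
      exact hi (by simp [Finsupp.tsub_apply, h2 i h])
    · ext i; simp [Finsupp.tsub_apply, Nat.add_sub_cancel' (h1 i)]

def mdeg {n : ℕ} (f : Fin n →₀ ℕ) : ℕ := ∑ i, f i

lemma mdeg_add {n : ℕ} (f g : Fin n →₀ ℕ) : mdeg (f + g) = mdeg f + mdeg g := by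
  simp [mdeg, Finset.sum_add_distrib]

lemma mdeg_single {n : ℕ} (j : Fin n) (c : ℕ) : mdeg (Finsupp.single j c) = c := by
  simp [mdeg, Finsupp.single_apply]

lemma eq_zero_of_mdeg_eq_zero {n : ℕ} {f : Fin n →₀ ℕ} (h : mdeg f = 0) : f = 0 := by
  ext i
  have := Finset.sum_eq_zero_iff.mp h i (Finset.mem_univ i)
  simpa using this

/-- The ideal of polynomials all of whose monomials have degree ≥ k. -/
def degIdeal (K : Type*) [Field K] (n k : ℕ) : Ideal (MvPolynomial (Fin n) K) where
  carrier := {p | ∀ f ∈ p.support, k ≤ mdeg f}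
  zero_mem' := by simp
  add_mem' := by
    classical
    intro p q hp hq f hf
    rcases Finset.mem_union.mp (MvPolynomial.support_add hf) with h | h
    · exact hp f h
    · exact hq f h
  smul_mem' := by
    classical
    intro c p hp f hf
    have : f ∈ c.support + p.support := MvPolynomial.support_mul c p (by simpa using hf)
    rcases Finset.mem_add.mp this with ⟨g, hg, h, hh, rfl⟩
    calc k ≤ mdeg h := hp h hh
    _ ≤ mdeg g + mdeg h := Nat.le_add_left _ _
    _ = mdeg (g + h) := (mdeg_add g h).symm

lemma pow_irrelevant_le (n k : ℕ) : (irrelevantIdeal K (Fin n)) ^ k ≤ degIdeal K n k := by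
  induction k with
  | zero => intro p _ f hf; exact Nat.zero_le _
  | succ k ih =>
    rw [pow_succ]
    refine Ideal.mul_le.mpr ?_
    intro p hp x hx f hf
    classical
    have : f ∈ p.support + x.support := MvPolynomial.support_mul p x hf
    rcases Finset.mem_add.mp this with ⟨g, hg, h, hh, rfl⟩
    have h1 : k ≤ mdeg g := ih hp g hg
    have h2 : 1 ≤ mdeg h := by
      have hx' : x ∈ degIdeal K n 1 := by
        revert hx
        have : irrelevantIdeal K (Fin n) ≤ degIdeal K n 1 := by
          rw [irrelevantIdeal, Ideal.span_le]
          rintro _ ⟨i, rfl⟩ f hf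
          rw [MvPolynomial.X, MvPolynomial.support_monomial] at hf
          simp only [one_ne_zero, if_false, Finset.mem_singleton] at hf
          subst hf
          simp [mdeg_single]
        exact fun hx => this hx
      exact hx' h hh
    rw [mdeg_add]; omega

lemma monomial_mem_pow {n k : ℕ} {f : Fin n →₀ ℕ} (h : k ≤ mdeg f) :
    monomial f (1:K) ∈ (irrelevantIdeal K (Fin n)) ^ k := by
  classical
  have key : ∀ s : Finset (Fin n), (∏ i ∈ s, (X i : MvPolynomial (Fin n) K) ^ f i) ∈
      (irrelevantIdeal K (Fin n)) ^ (∑ i ∈ s, f i) := by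
    intro s
    refine Finset.induction_on s ?_ ?_
    · simp
    · intro a s' hx ih
      rw [Finset.prod_insert hx, Finset.sum_insert hx, pow_add]
      refine Ideal.mul_mem_mul ?_ ih
      exact Ideal.pow_mem_pow
        (show (X a : MvPolynomial (Fin n) K) ∈ irrelevantIdeal K (Fin n) from
          Ideal.subset_span ⟨a, rfl⟩) _
  have hmono : monomial f (1:K) = ∏ i : Fin n, (X i : MvPolynomial (Fin n) K) ^ f i := by
    rw [MvPolynomial.monomial_eq, map_one, one_mul]
    rw [Finsupp.prod_fintype]
    intro i; simp
  rw [hmono]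
  have := key Finset.univ
  exact Ideal.pow_le_pow_right h this


def F3 (a b c : ℕ) : Fin 3 →₀ ℕ := Finsupp.equivFunOnFinite.symm ![a, b, c]

@[simp] lemma F3_apply0 (a b c : ℕ) : F3 a b c 0 = a := rfl
@[simp] lemma F3_apply1 (a b c : ℕ) : F3 a b c 1 = b := rfl
@[simp] lemma F3_apply2 (a b c : ℕ) : F3 a b c 2 = c := rfl

lemma mdeg_eq (f : Fin 3 →₀ ℕ) : mdeg f = f 0 + f 1 + f 2 := by
  simp [mdeg, Fin.sum_univ_three]

lemma F3_eta (f : Fin 3 →₀ ℕ) : F3 (f 0) (f 1) (f 2) = f := by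
  ext i
  fin_cases i <;> rfl

def D3 (m : ℕ) : Finset (Fin 3 →₀ ℕ) :=
  ((Finset.range (m+1)).sigma (fun a => Finset.range (m+1-a))).image
    (fun p => F3 p.1 p.2 (m - p.1 - p.2))

lemma mem_D3_iff {m : ℕ} {f : Fin 3 →₀ ℕ} : f ∈ D3 m ↔ mdeg f = m := by
  rw [D3, Finset.mem_image]
  constructor
  · rintro ⟨⟨a, b⟩, hp, rfl⟩
    simp only [Finset.mem_sigma, Finset.mem_range] at hp
    rw [mdeg_eq]; simp; omega
  · intro h
    rw [mdeg_eq] at h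
    refine ⟨⟨f 0, f 1⟩, ?_, ?_⟩
    · simp only [Finset.mem_sigma, Finset.mem_range]; omega
    · have : m - f 0 - f 1 = f 2 := by omega
      rw [this]; exact F3_eta f

lemma sum_range_sub (n : ℕ) : (∑ a ∈ Finset.range n, (n - a)) * 2 = n * (n+1) := by
  induction n with
  | zero => simp
  | succ n ih =>
    rw [Finset.sum_range_succ]
    have : ∑ a ∈ Finset.range n, (n + 1 - a) = (∑ a ∈ Finset.range n, ((n - a) + 1)) := by
      refine Finset.sum_congr rfl ?_
      intro a ha
      have := Finset.mem_range.mp ha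
      omega
    rw [this, Finset.sum_add_distrib]
    simp only [Finset.sum_const, Finset.card_range, smul_eq_mul, mul_one]
    have h2 : (n+1) * (n+1+1) = n*(n+1) + 2*(n+1) := by ring
    omega

lemma card_D3 (m : ℕ) : (D3 m).card * 2 = (m+1) * (m+2) := by
  rw [D3]
  rw [Finset.card_image_of_injOn]
  · rw [Finset.card_sigma]
    simp only [Finset.card_range]
    have := sum_range_sub (m+1)
    convert this using 2
  · rintro ⟨a, b⟩ hp ⟨a', b'⟩ hq h
    have h0 := congrArg (fun f => f 0) h
    have h1 := congrArg (fun f => f 1) h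
    simp only [F3_apply0, F3_apply1] at h0 h1
    subst h0; subst h1; rfl

/-- support of an element of a span of monomials -/
lemma support_subset_of_mem_span {n : ℕ} {E : Set (Fin n →₀ ℕ)} {p : MvPolynomial (Fin n) K}
    (hp : p ∈ Submodule.span K ((fun e => monomial e (1:K)) '' E)) :
    (p.support : Set (Fin n →₀ ℕ)) ⊆ E := by
  classical
  refine Submodule.span_induction ?_ ?_ ?_ ?_ hp
  · rintro x ⟨e, he, rfl⟩
    intro f hf
    simp only [Finset.coe_subset, MvPolynomial.support_monomial] at hf ⊢
    simp only [one_ne_zero, if_false, Finset.mem_coe, Finset.mem_singleton] at hf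
    subst hf; exact he
  · simp
  · intro x y _ _ hx hy
    refine subset_trans ?_ (Set.union_subset hx hy)
    exact_mod_cast Finset.coe_subset.mpr (MvPolynomial.support_add)
  · intro c x _ hx
    exact subset_trans (Finset.coe_subset.mpr MvPolynomial.support_smul) hx

lemma mem_of_monomial_mem_span {n : ℕ} {E : Set (Fin n →₀ ℕ)} {f : Fin n →₀ ℕ}
    (hp : monomial f (1:K) ∈ Submodule.span K ((fun e => monomial e (1:K)) '' E)) :
    f ∈ E := by
  have := support_subset_of_mem_span hp
  apply this
  simp [MvPolynomial.support_monomial]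

lemma iSupIndep_span_monomials {n : ℕ} {ι : Type*} {E : ι → Set (Fin n →₀ ℕ)}
    (h : Pairwise (fun i j => Disjoint (E i) (E j))) :
    iSupIndep (fun i => Submodule.span K ((fun e => monomial e (1:K)) '' E i)) := by
  rw [iSupIndep_def]
  intro i
  rw [Submodule.disjoint_def]
  intro x hx1 hx2
  have hsupp1 : (x.support : Set (Fin n →₀ ℕ)) ⊆ E i := support_subset_of_mem_span hx1
  have hle : (⨆ j, ⨆ (_ : j ≠ i), Submodule.span K ((fun e => monomial e (1:K)) '' E j)) ≤
      Submodule.span K ((fun e => monomial e (1:K)) '' ⋃ (j) (_ : j ≠ i), E j) := by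
    refine iSup₂_le fun j hj => Submodule.span_mono ?_
    exact Set.image_mono (Set.subset_iUnion₂ (s := fun j _ => E j) j hj)
  have hsupp2 : (x.support : Set (Fin n →₀ ℕ)) ⊆ ⋃ (j) (_ : j ≠ i), E j :=
    support_subset_of_mem_span (hle hx2)
  have hemp : x.support = ∅ := by
    rw [← Finset.coe_eq_empty]
    rw [← Set.subset_empty_iff]
    intro f hf
    have h1 := hsupp1 hf
    have h2 := hsupp2 hf
    rcases Set.mem_iUnion₂.mp h2 with ⟨j, hj, hfj⟩
    exact absurd h1 (Set.disjoint_right.mp (h hj.symm) hfj)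
  exact MvPolynomial.support_eq_empty.mp hemp

lemma monomial_mem_stanleySpace {n : ℕ} {d : Fin n →₀ ℕ} {Z : Finset (Fin n)}
    {f : Fin n →₀ ℕ} (hf : f ∈ SE d Z) :
    monomial f (1:K) ∈ stanleySpace K d Z := by
  rw [stanleySpace_eq_span]
  exact Submodule.subset_span ⟨f, hf, rfl⟩

lemma iSup_stanley_eq_span {n r : ℕ} (d : Fin r → (Fin n →₀ ℕ)) (Z : Fin r → Finset (Fin n)) :
    (⨆ i, stanleySpace K (d i) (Z i)) =
      Submodule.span K ((fun e => monomial e (1:K)) '' ⋃ i, SE (d i) (Z i)) := by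
  rw [Set.image_iUnion, Submodule.span_iUnion]
  exact iSup_congr fun i => stanleySpace_eq_span (d i) (Z i)

lemma upper_bound (k : ℕ) (hk : 2 ≤ k) (r : ℕ) (d : Fin r → (Fin 3 →₀ ℕ))
    (Z : Fin r → Finset (Fin 3))
    (hdec : IsStanleyDecomp
      (Submodule.restrictScalars K ((irrelevantIdeal K (Fin 3)) ^ k)) r d Z)
    (hZ : ∀ i, 2 ≤ (Z i).card) : False := by
  classical
  obtain ⟨hind, hsup⟩ := hdec
  set V := Submodule.restrictScalars K ((irrelevantIdeal K (Fin 3)) ^ k) with hV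
  -- each monomial of V has degree ≥ k
  have hdegV : ∀ f : Fin 3 →₀ ℕ, monomial f (1:K) ∈ V → k ≤ mdeg f := by
    intro f hf
    rw [hV, Submodule.restrictScalars_mem] at hf
    have := pow_irrelevant_le (K := K) 3 k hf
    apply this
    simp [MvPolynomial.support_monomial]
  -- each base has degree ≥ k
  have hd_deg : ∀ i, k ≤ mdeg (d i) := by
    intro i
    apply hdegV
    rw [← hsup]
    refine le_iSup (fun i => stanleySpace K (d i) (Z i)) i ?_
    exact monomial_mem_stanleySpace ⟨0, by simp, by simp⟩
  -- covering
  have hcov : ∀ f : Fin 3 →₀ ℕ, k ≤ mdeg f → ∃ i, f ∈ SE (d i) (Z i) := by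
    intro f hf
    have h1 : monomial f (1:K) ∈ V := by
      rw [hV, Submodule.restrictScalars_mem]
      exact monomial_mem_pow hf
    rw [← hsup, iSup_stanley_eq_span] at h1
    exact Set.mem_iUnion.mp (mem_of_monomial_mem_span h1)
  -- every degree-k monomial is a base
  have hbase : ∀ f : Fin 3 →₀ ℕ, mdeg f = k → ∃ i, d i = f := by
    intro f hf
    obtain ⟨i, e, he, hfe⟩ := hcov f hf.ge
    refine ⟨i, ?_⟩
    have h1 : mdeg f = mdeg (d i) + mdeg e := by rw [hfe, mdeg_add]
    have h2 : mdeg e = 0 := by have := hd_deg i; omega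
    rw [hfe, eq_zero_of_mdeg_eq_zero h2, add_zero]
  -- the two-new-monomials finsets
  set T : (Fin 3 →₀ ℕ) → Finset (Fin 3 →₀ ℕ) := fun f =>
    if h : ∃ i, d i = f then (Z h.choose).image (fun j => f + Finsupp.single j 1) else ∅
    with hT
  have hadd_inj : ∀ (f : Fin 3 →₀ ℕ), Function.Injective (fun j => f + Finsupp.single j 1) := by
    intro f j j' hjj'
    by_contra hne
    have := congrArg (fun g => g j) hjj'
    simp only [Finsupp.add_apply, Finsupp.single_apply] at this
    rw [if_pos trivial, if_neg (fun hh => hne hh.symm)] at this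
    omega
  -- membership of elements of T f in the piece of f
  have hTmem : ∀ f : Fin 3 →₀ ℕ, ∀ h : ∃ i, d i = f, ∀ g ∈ T f, g ∈ SE (d h.choose) (Z h.choose) := by
    intro f h g hg
    rw [hT] at hg
    simp only [dif_pos h, Finset.mem_image] at hg
    obtain ⟨j, hj, rfl⟩ := hg
    refine ⟨Finsupp.single j 1, ?_, by rw [h.choose_spec]⟩
    intro x hx
    simp only [Finset.coe_sort_coe, Finset.mem_coe] at hx
    have hxj := Finsupp.support_single_subset hx
    simp only [Finset.mem_singleton] at hxj
    subst hxj
    exact hj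
  have hTcard : ∀ f ∈ D3 k, 2 ≤ (T f).card := by
    intro f hf
    have h : ∃ i, d i = f := hbase f (mem_D3_iff.mp hf)
    rw [hT]
    simp only [dif_pos h]
    rw [Finset.card_image_of_injective _ (hadd_inj f)]
    exact hZ _
  have hTsub : ∀ f ∈ D3 k, T f ⊆ D3 (k+1) := by
    intro f hf g hg
    have h : ∃ i, d i = f := hbase f (mem_D3_iff.mp hf)
    rw [hT] at hg
    simp only [dif_pos h, Finset.mem_image] at hg
    obtain ⟨j, _, rfl⟩ := hg
    rw [mem_D3_iff, mdeg_add, mdeg_single, mem_D3_iff.mp hf]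
  have hTdisj : ∀ f ∈ D3 k, ∀ f' ∈ D3 k, f ≠ f' → Disjoint (T f) (T f') := by
    intro f hf f' hf' hne
    have h : ∃ i, d i = f := hbase f (mem_D3_iff.mp hf)
    have h' : ∃ i, d i = f' := hbase f' (mem_D3_iff.mp hf')
    rw [Finset.disjoint_left]
    intro g hg hg'
    have hii' : h.choose ≠ h'.choose := by
      intro hcc
      exact hne (h.choose_spec ▸ hcc ▸ h'.choose_spec)
    have hm1 : monomial g (1:K) ∈ stanleySpace K (d h.choose) (Z h.choose) :=
      monomial_mem_stanleySpace (hTmem f h g hg)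
    have hm2 : monomial g (1:K) ∈ stanleySpace K (d h'.choose) (Z h'.choose) :=
      monomial_mem_stanleySpace (hTmem f' h' g hg')
    have hdis := (iSupIndep_def.mp hind) h.choose
    have hle : stanleySpace K (d h'.choose) (Z h'.choose) ≤
        ⨆ j, ⨆ (_ : j ≠ h.choose), stanleySpace K (d j) (Z j) :=
      le_iSup₂ (f := fun j _ => stanleySpace K (d j) (Z j)) h'.choose hii'.symm
    have := Submodule.disjoint_def.mp hdis _ hm1 (hle hm2)
    exact one_ne_zero (MvPolynomial.monomial_eq_zero.mp this)
  -- counting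
  have hcount : ((D3 k).biUnion T).card = ∑ f ∈ D3 k, (T f).card :=
    Finset.card_biUnion hTdisj
  have hsubset : (D3 k).biUnion T ⊆ D3 (k+1) := by
    intro g hg
    rcases Finset.mem_biUnion.mp hg with ⟨f, hf, hgf⟩
    exact hTsub f hf hgf
  have hmain : 2 * (D3 k).card ≤ (D3 (k+1)).card := by
    calc 2 * (D3 k).card = ∑ _f ∈ D3 k, 2 := by rw [Finset.sum_const]; ring
    _ ≤ ∑ f ∈ D3 k, (T f).card := Finset.sum_le_sum hTcard
    _ = ((D3 k).biUnion T).card := hcount.symm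
    _ ≤ (D3 (k+1)).card := Finset.card_le_card hsubset
  have c1 := card_D3 k
  have c2 := card_D3 (k+1)
  have hfin : 2 * ((k+1) * (k+2)) ≤ (k+2) * (k+3) := by
    calc 2 * ((k+1) * (k+2)) = 2 * ((D3 k).card * 2) := by rw [c1]
    _ = (2 * (D3 k).card) * 2 := by ring
    _ ≤ (D3 (k+1)).card * 2 := by omega
    _ = (k+1+1) * (k+1+2) := c2
    _ = (k+2) * (k+3) := by ring
  nlinarith

lemma SE_univ_iff {d f : Fin 3 →₀ ℕ} :
    f ∈ SE d (Finset.univ : Finset (Fin 3)) ↔ d 0 ≤ f 0 ∧ d 1 ≤ f 1 ∧ d 2 ≤ f 2 := by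
  rw [mem_SE_iff]
  constructor
  · rintro ⟨h1, _⟩; exact ⟨h1 0, h1 1, h1 2⟩
  · rintro ⟨h0, h1, h2⟩
    refine ⟨?_, by simp⟩
    intro i; fin_cases i <;> assumption

lemma SE_01_iff {d f : Fin 3 →₀ ℕ} :
    f ∈ SE d ({0, 1} : Finset (Fin 3)) ↔ d 0 ≤ f 0 ∧ d 1 ≤ f 1 ∧ f 2 = d 2 := by
  rw [mem_SE_iff]
  constructor
  · rintro ⟨h1, h2⟩
    exact ⟨h1 0, h1 1, h2 2 (by decide)⟩
  · rintro ⟨h0, h1, h2⟩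
    constructor
    · intro i; fin_cases i
      · exact h0
      · exact h1
      · exact h2.ge
    · intro i hi; fin_cases i
      · exact absurd (by decide) hi
      · exact absurd (by decide) hi
      · exact h2

lemma SE_0_iff {d f : Fin 3 →₀ ℕ} :
    f ∈ SE d ({0} : Finset (Fin 3)) ↔ d 0 ≤ f 0 ∧ f 1 = d 1 ∧ f 2 = d 2 := by
  rw [mem_SE_iff]
  constructor
  · rintro ⟨h1, h2⟩
    exact ⟨h1 0, h2 1 (by decide), h2 2 (by decide)⟩
  · rintro ⟨h0, h1, h2⟩
    constructor
    · intro i; fin_cases i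
      · exact h0
      · exact h1.ge
      · exact h2.ge
    · intro i hi; fin_cases i
      · exact absurd (by decide) hi
      · exact h1
      · exact h2

/-- Index type for the lower-bound Stanley decomposition of `m^k`. -/
def lbι (k : ℕ) : Type := Unit ⊕ (Fin k ⊕ (Σ j : Fin k, Fin (j+1)))

instance (k : ℕ) : Fintype (lbι k) := by unfold lbι; infer_instance

def lbD (k : ℕ) : lbι k → (Fin 3 →₀ ℕ)
  | Sum.inl _ => F3 0 0 k
  | Sum.inr (Sum.inl j) => F3 0 (j+1) (k-(j+1))
  | Sum.inr (Sum.inr ⟨j, b⟩) => F3 (j+1-b) b (k-(j+1))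

def lbZ (k : ℕ) : lbι k → Finset (Fin 3)
  | Sum.inl _ => Finset.univ
  | Sum.inr (Sum.inl _) => {0, 1}
  | Sum.inr (Sum.inr _) => {0}

lemma lbZ_card (k : ℕ) (x : lbι k) : 1 ≤ (lbZ k x).card := by
  rcases x with _ | (_ | ⟨j, b⟩) <;> simp [lbZ]

lemma mem_SE_lb {k : ℕ} {f : Fin 3 →₀ ℕ} (x : lbι k) :
    f ∈ SE (lbD k x) (lbZ k x) ↔
      (match x with
      | Sum.inl _ => k ≤ f 2
      | Sum.inr (Sum.inl j) => (j:ℕ)+1 ≤ f 1 ∧ f 2 = k - ((j:ℕ)+1)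
      | Sum.inr (Sum.inr ⟨j, b⟩) =>
          (j:ℕ)+1-(b:ℕ) ≤ f 0 ∧ f 1 = (b:ℕ) ∧ f 2 = k - ((j:ℕ)+1)) := by
  rcases x with _ | (j | ⟨j, b⟩)
  · rw [lbD, lbZ, SE_univ_iff]
    simp
  · rw [lbD, lbZ, SE_01_iff]
    simp
  · rw [lbD, lbZ, SE_0_iff]
    simp

lemma lb_pairwise (k : ℕ) :
    Pairwise (fun x y => Disjoint (SE (lbD k x) (lbZ k x)) (SE (lbD k y) (lbZ k y))) := by
  intro x y hxy
  rw [Set.disjoint_left]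
  intro f hfx hfy
  rw [mem_SE_lb] at hfx hfy
  rcases x with _ | (j | ⟨j, b⟩) <;> rcases y with _ | (j' | ⟨j', b'⟩) <;>
    simp only at hfx hfy
  · exact hxy (congrArg Sum.inl (Subsingleton.elim _ _))
  · obtain ⟨h1, h2⟩ := hfy; have := j'.isLt; omega
  · obtain ⟨h1, h2, h3⟩ := hfy; have := j'.isLt; omega
  · obtain ⟨h1, h2⟩ := hfx; have := j.isLt; omega
  · have hj : j = j' := by
      have := j.isLt; have := j'.isLt
      exact Fin.ext (by omega)
    exact hxy (by rw [hj])
  · have := j.isLt; have := j'.isLt; have := b'.isLt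
    obtain ⟨h1, h2⟩ := hfx; obtain ⟨h3, h4, h5⟩ := hfy
    omega
  · obtain ⟨h1, h2, h3⟩ := hfx; have := j.isLt; omega
  · have := j.isLt; have := j'.isLt; have := b.isLt
    obtain ⟨h1, h2, h3⟩ := hfx; obtain ⟨h4, h5⟩ := hfy
    omega
  · have hj : j = j' := by
      have := j.isLt; have := j'.isLt
      exact Fin.ext (by omega)
    subst hj
    have hb : b = b' := Fin.ext (by omega)
    subst hb
    exact hxy rfl

lemma lb_deg {k : ℕ} (x : lbι k) : mdeg (lbD k x) = k := by
  rcases x with _ | (j | ⟨j, b⟩)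
  · rw [lbD, mdeg_eq]; simp
  · rw [lbD, mdeg_eq]
    simp only [F3_apply0, F3_apply1, F3_apply2]
    have := j.isLt; omega
  · rw [lbD, mdeg_eq]
    simp only [F3_apply0, F3_apply1, F3_apply2]
    have := j.isLt; have := b.isLt; omega

lemma lb_cover {k : ℕ} {f : Fin 3 →₀ ℕ} (hf : k ≤ mdeg f) :
    ∃ x : lbι k, f ∈ SE (lbD k x) (lbZ k x) := by
  rw [mdeg_eq] at hf
  by_cases h2 : k ≤ f 2
  · exact ⟨Sum.inl (), by refine (mem_SE_lb _).mpr ?_; exact h2⟩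
  · push_neg at h2
    by_cases h1 : k - f 2 ≤ f 1
    · refine ⟨Sum.inr (Sum.inl ⟨k - f 2 - 1, by omega⟩), ?_⟩
      refine (mem_SE_lb _).mpr ?_
      constructor <;> simp <;> omega
    · push_neg at h1
      refine ⟨Sum.inr (Sum.inr ⟨⟨k - f 2 - 1, by omega⟩, ⟨f 1, by simp; omega⟩⟩), ?_⟩
      refine (mem_SE_lb _).mpr ?_
      refine ⟨?_, rfl, ?_⟩ <;> simp <;> omega

lemma lower_bound (k : ℕ) (hk : 1 ≤ k) :
    ∃ r d Z, IsStanleyDecomp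
      (Submodule.restrictScalars K ((irrelevantIdeal K (Fin 3)) ^ k)) r d Z ∧
      ∀ i, 1 ≤ (Z i).card := by
  classical
  set e : Fin (Fintype.card (lbι k)) ≃ lbι k := (Fintype.equivFin (lbι k)).symm with he
  refine ⟨Fintype.card (lbι k), fun i => lbD k (e i), fun i => lbZ k (e i), ⟨?_, ?_⟩, ?_⟩
  · have hip : iSupIndep (fun x : lbι k => stanleySpace K (lbD k x) (lbZ k x)) := by
      have := iSupIndep_span_monomials (K := K) (lb_pairwise k)
      convert this using 1
      funext x
      exact stanleySpace_eq_span _ _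
    exact hip.comp e.injective
  · rw [e.iSup_comp (g := fun x => stanleySpace K (lbD k x) (lbZ k x))]
    apply le_antisymm
    · refine iSup_le fun x => ?_
      rw [stanleySpace_eq_span, Submodule.span_le]
      rintro _ ⟨g, hg, rfl⟩
      rw [SetLike.mem_coe, Submodule.restrictScalars_mem]
      obtain ⟨ev, _, rfl⟩ := hg
      apply monomial_mem_pow
      rw [mdeg_add, lb_deg]
      exact Nat.le_add_right _ _
    · intro p hp
      rw [Submodule.restrictScalars_mem] at hp
      have hdeg : ∀ v ∈ p.support, k ≤ mdeg v := pow_irrelevant_le 3 k hp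
      rw [MvPolynomial.as_sum p]
      refine Submodule.sum_mem _ fun v hv => ?_
      obtain ⟨x, hx⟩ := lb_cover (hdeg v hv)
      have : (monomial v) (coeff v p) = (coeff v p) • (monomial v) (1:K) := by
        rw [MvPolynomial.smul_monomial, smul_eq_mul, mul_one]
      rw [this]
      refine Submodule.smul_mem _ _ ?_
      exact le_iSup (fun x : lbι k => stanleySpace K (lbD k x) (lbZ k x)) x
        (monomial_mem_stanleySpace hx)
  · intro i
    exact lbZ_card k (e i)

end AuxiliaryLemmas

/-- For `k ≥ 2`, the ideal `I = (x_1,x_2,x_3)^k ⊆ K[x_1,x_2,x_3]` has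
`sdepth(I) = 1`. -/
theorem stmt17 {K : Type*} [Field K] (k : ℕ) (hk : 2 ≤ k) :
    sdepthIdeal ((irrelevantIdeal K (Fin 3)) ^ k) = 1 := by
  rw [sdepthIdeal, sdepth]
  have h1 : (1:ℕ) ∈ {x | ∃ r d Z, IsStanleyDecomp
      (Submodule.restrictScalars K ((irrelevantIdeal K (Fin 3)) ^ k)) r d Z ∧
      ∀ i, x ≤ (Z i).card} := by
    obtain ⟨r, d, Z, hdec, hcard⟩ := lower_bound (K := K) k (by omega)
    exact ⟨r, d, Z, hdec, hcard⟩
  have hub : ∀ x ∈ {x | ∃ r d Z, IsStanleyDecomp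
      (Submodule.restrictScalars K ((irrelevantIdeal K (Fin 3)) ^ k)) r d Z ∧
      ∀ i, x ≤ (Z i).card}, x ≤ 1 := by
    rintro x ⟨r, d, Z, hdec, hcard⟩
    by_contra h
    push_neg at h
    exact upper_bound k hk r d Z hdec (fun i => le_trans h (hcard i))
  exact le_antisymm (csSup_le ⟨1, h1⟩ hub) (le_csSup ⟨1, hub⟩ h1)
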